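/- Let S, T be n×n complex Hermitian matrices with 0 ≤ S ≤ 1 and 0 ≤ T ≤ 1, and set M := √S·√T + √(1−S)·√(1−T). Then det(M·M†) ≤ exp(−η(S,T)²). -/

import Mathlib

open scoped ComplexOrder Matrix
open scoped Classical ComplexOrder Matrix

/-- The positive semidefinite square root of a positive semidefinite matrix
(junk value `0` if the matrix is not positive semidefinite). -/
noncomputable def msqrt {n : Type*} [Fintype n] [DecidableEq n]
    (A : Matrix n n ℂ) : Matrix n n ℂ :=
  if h : A.PosSemidef then
    h.1.eigenvectorUnitary.1 * Matrix.diagonal ((↑) ∘ (√·) ∘ h.1.eigenvalues) *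
      (star h.1.eigenvectorUnitary : Matrix n n ℂ)
  else 0

open Matrix

namespace Matrix

noncomputable def PosSemidef.sqrt {n : Type*} [Fintype n] [DecidableEq n] {A : Matrix n n ℂ}
    (h : A.PosSemidef) : Matrix n n ℂ :=
  h.1.eigenvectorUnitary.1 * Matrix.diagonal ((↑) ∘ (√·) ∘ h.1.eigenvalues) *
    (star h.1.eigenvectorUnitary : Matrix n n ℂ)

lemma IsHermitian.star_mul_self_mul_eq_diagonal {n : Type*} [Fintype n] [DecidableEq n]
    {A : Matrix n n ℂ} (hA : A.IsHermitian) :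
    star (hA.eigenvectorUnitary : Matrix n n ℂ) * A * (hA.eigenvectorUnitary : Matrix n n ℂ)
      = diagonal ((↑) ∘ hA.eigenvalues) := by
  have := hA.conjStarAlgAut_star_eigenvectorUnitary
  simpa using this

lemma PosSemidef.posSemidef_sqrt {n : Type*} [Fintype n] [DecidableEq n] {A : Matrix n n ℂ}
    (h : A.PosSemidef) : h.sqrt.PosSemidef := by
  unfold PosSemidef.sqrt
  have hD : (diagonal ((↑) ∘ (√·) ∘ h.1.eigenvalues : n → ℂ)).PosSemidef :=
    PosSemidef.diagonal (fun i => by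
      simp only [Pi.zero_apply, Function.comp_apply]
      exact Complex.zero_le_real.mpr (Real.sqrt_nonneg _))
  have := hD.mul_mul_conjTranspose_same (h.1.eigenvectorUnitary : Matrix n n ℂ)
  rw [star_eq_conjTranspose]
  exact this

lemma PosSemidef.sqrt_mul_self {n : Type*} [Fintype n] [DecidableEq n] {A : Matrix n n ℂ}
    (h : A.PosSemidef) : h.sqrt * h.sqrt = A := by
  unfold PosSemidef.sqrt
  set U := (h.1.eigenvectorUnitary : Matrix n n ℂ) with hU
  have hUU' : star U * U = 1 := Unitary.coe_star_mul_self _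
  have hDD : diagonal ((↑) ∘ (√·) ∘ h.1.eigenvalues : n → ℂ) *
      diagonal ((↑) ∘ (√·) ∘ h.1.eigenvalues : n → ℂ) = diagonal ((↑) ∘ h.1.eigenvalues) := by
    rw [diagonal_mul_diagonal]
    congr 1
    funext i
    simp only [Function.comp_apply]
    rw [← Complex.ofReal_mul, Real.mul_self_sqrt (h.eigenvalues_nonneg i)]
  conv_rhs => rw [h.1.spectral_theorem]
  have hDD' : diagonal (RCLike.ofReal ∘ h.1.eigenvalues : n → ℂ) =
      diagonal ((↑) ∘ (√·) ∘ h.1.eigenvalues : n → ℂ) *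
      diagonal ((↑) ∘ (√·) ∘ h.1.eigenvalues : n → ℂ) := hDD.symm
  rw [Unitary.conjStarAlgAut_apply, ← hU, hDD']
  simp only [mul_assoc]
  rw [← mul_assoc (star U) U, hUU', one_mul]

end Matrix

lemma sqrt_commute {n : Type*} [Fintype n] [DecidableEq n] {A B : Matrix n n ℂ}
    (hA : A.PosSemidef) (h : A * B = B * A) : hA.sqrt * B = B * hA.sqrt := by
  set U : Matrix n n ℂ := (hA.1.eigenvectorUnitary : Matrix n n ℂ) with hUdef
  have hUU : U * star U = 1 := (Matrix.mem_unitaryGroup_iff).mp hA.1.eigenvectorUnitary.2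
  have hUU' : star U * U = 1 := (Matrix.mem_unitaryGroup_iff').mp hA.1.eigenvectorUnitary.2
  have hcan1 : ∀ X : Matrix n n ℂ, U * (star U * X) = X := fun X => by
    rw [← mul_assoc, hUU, one_mul]
  have hcan2 : ∀ X : Matrix n n ℂ, star U * (U * X) = X := fun X => by
    rw [← mul_assoc, hUU', one_mul]
  set d := hA.1.eigenvalues with hd
  set C := star U * B * U with hC
  have hB : B = U * C * star U := by
    rw [hC]; simp only [mul_assoc, hcan1]
    rw [hUU, mul_one]
  have h2 := hA.1.star_mul_self_mul_eq_diagonal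
  rw [← hUdef] at h2
  have h2' : star U * A * U = diagonal ((↑) ∘ d : n → ℂ) := h2
  have hDC : diagonal ((↑) ∘ d : n → ℂ) * C = C * diagonal ((↑) ∘ d) := by
    rw [← h2', hC]
    calc star U * A * U * (star U * B * U)
        = star U * (A * B) * U := by
          simp only [mul_assoc]; rw [hcan1]
      _ = star U * (B * A) * U := by rw [h]
      _ = star U * B * U * (star U * A * U) := by
          simp only [mul_assoc]; rw [hcan1]
  have hij : ∀ i j, (d i : ℂ) * C i j = C i j * (d j : ℂ) := by
    intro i j
    have := congrFun (congrFun hDC i) j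
    simpa [Matrix.diagonal_mul, Matrix.mul_diagonal] using this
  have hDC2 : diagonal ((↑) ∘ Real.sqrt ∘ d : n → ℂ) * C
      = C * diagonal ((↑) ∘ Real.sqrt ∘ d) := by
    ext i j
    simp only [Matrix.diagonal_mul, Matrix.mul_diagonal, Function.comp_apply]
    rcases eq_or_ne (C i j) 0 with h0 | h0
    · simp [h0]
    · have hd' : d i = d j := by
        have h' : (d i : ℂ) * C i j = (d j : ℂ) * C i j := by
          rw [hij i j, mul_comm]
        exact_mod_cast mul_right_cancel₀ h0 h'
      rw [hd']; ring
  have hs : hA.sqrt = U * diagonal ((↑) ∘ Real.sqrt ∘ d : n → ℂ) * star U := rfl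
  set D := diagonal ((↑) ∘ Real.sqrt ∘ d : n → ℂ)
  have e1 : hA.sqrt * B = U * (D * (C * star U)) := by
    rw [hs, hB]; simp only [mul_assoc]; rw [hcan2]
  have e2 : B * hA.sqrt = U * (C * (D * star U)) := by
    rw [hs, hB]; simp only [mul_assoc]; rw [hcan2]
  rw [e1, e2, ← mul_assoc D, hDC2, mul_assoc]

set_option maxHeartbeats 1000000

/-- The Hilbert-Schmidt (Frobenius) norm of a matrix. -/
noncomputable def frob {n : Type*} [Fintype n]
    (M : Matrix n n ℂ) : ℝ :=
  Real.sqrt (∑ i, ∑ j, ‖M i j‖ ^ 2)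

/-- `η(A,B) = ‖√(1−A)·√B − √A·√(1−B)‖₂`. -/
noncomputable def eta {n : Type*} [Fintype n] [DecidableEq n]
    (A B : Matrix n n ℂ) : ℝ :=
  frob (msqrt (1 - A) * msqrt B - msqrt A * msqrt (1 - B))

theorem det_le_exp_neg_eta_sq {n : ℕ}
    (S T : Matrix (Fin n) (Fin n) ℂ)
    (hS : S.PosSemidef) (hS1 : (1 - S).PosSemidef)
    (hT : T.PosSemidef) (hT1 : (1 - T).PosSemidef)
    (M : Matrix (Fin n) (Fin n) ℂ)
    (hM : M = msqrt S * msqrt T + msqrt (1 - S) * msqrt (1 - T)) :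
    (M * Mᴴ).det ≤ ((Real.exp (-(eta S T ^ 2)) : ℝ) : ℂ) := by
  set a := hS.sqrt with hadef
  set a' := hS1.sqrt with ha'def
  set b := hT.sqrt with hbdef
  set b' := hT1.sqrt with hb'def
  have hmS : msqrt S = a := dif_pos hS
  have hmS1 : msqrt (1 - S) = a' := dif_pos hS1
  have hmT : msqrt T = b := dif_pos hT
  have hmT1 : msqrt (1 - T) = b' := dif_pos hT1
  set N := a' * b - a * b' with hNdef
  have hNeta : eta S T = frob N := by
    rw [eta, hmS, hmS1, hmT, hmT1]
  -- commutation
  have hb'T : b' * T = T * b' := sqrt_commute hT1 (by noncomm_ring)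
  have hbb' : b * b' = b' * b := sqrt_commute hT hb'T.symm
  -- hermitian facts
  have ha : aᴴ = a := hS.posSemidef_sqrt.1
  have ha' : a'ᴴ = a' := hS1.posSemidef_sqrt.1
  have hb : bᴴ = b := hT.posSemidef_sqrt.1
  have hb' : b'ᴴ = b' := hT1.posSemidef_sqrt.1
  have ha2 : a * a = S := hS.sqrt_mul_self
  have ha'2 : a' * a' = 1 - S := hS1.sqrt_mul_self
  have hb2 : b * b = T := hT.sqrt_mul_self
  have hb'2 : b' * b' = 1 - T := hT1.sqrt_mul_self
  have hM' : M = a * b + a' * b' := by rw [hM, hmS, hmS1, hmT, hmT1]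
  have hMH : Mᴴ = b * a + b' * a' := by
    rw [hM', conjTranspose_add, conjTranspose_mul, conjTranspose_mul, ha, ha', hb, hb']
  have hNH : Nᴴ = b * a' - b' * a := by
    rw [hNdef, conjTranspose_sub, conjTranspose_mul, conjTranspose_mul, ha, ha', hb, hb']
  -- key identity
  have key : M * Mᴴ = 1 - N * Nᴴ := by
    have expand : (a*b + a'*b') * (b*a + b'*a') + (a'*b - a*b') * (b*a' - b'*a)
        = a*(b*b)*a + a*(b*b')*a' + a'*(b'*b)*a + a'*(b'*b')*a'
          + a'*(b*b)*a' - a'*(b*b')*a - a*(b'*b)*a' + a*(b'*b')*a := by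
      noncomm_ring
    rw [hbb', hb2, hb'2] at expand
    have expand2 : a*T*a + a*(b'*b)*a' + a'*(b'*b)*a + a'*((1:Matrix (Fin n) (Fin n) ℂ)-T)*a'
          + a'*T*a' - a'*(b'*b)*a - a*(b'*b)*a' + a*((1:Matrix (Fin n) (Fin n) ℂ)-T)*a
        = a*a + a'*a' := by noncomm_ring
    rw [expand2, ha2, ha'2] at expand
    have hone : S + ((1:Matrix (Fin n) (Fin n) ℂ) - S) = 1 := by noncomm_ring
    rw [hone] at expand
    rw [hMH, hNH, hM', hNdef]
    linear_combination (norm := noncomm_ring) expand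
  set P := M * Mᴴ with hPdef
  have hP : P.PosSemidef := Matrix.posSemidef_self_mul_conjTranspose M
  set lam := hP.1.eigenvalues with hlam
  have hnn : ∀ i, 0 ≤ lam i := hP.eigenvalues_nonneg
  have hdet : P.det = ∏ i, (lam i : ℂ) := hP.1.det_eq_prod_eigenvalues
  -- trace of P equals sum of eigenvalues
  have htr : P.trace = ∑ i, (lam i : ℂ) := by
    conv_lhs => rw [hP.1.spectral_theorem]
    rw [Unitary.conjStarAlgAut_apply, Matrix.trace_mul_cycle,
      (Matrix.mem_unitaryGroup_iff').mp hP.1.eigenvectorUnitary.2, one_mul,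
      Matrix.trace_diagonal]
    rfl
  set s : ℝ := ∑ i, ∑ j, ‖N i j‖ ^ 2 with hsdef
  have hs0 : 0 ≤ s := by positivity
  have htrN : (N * Nᴴ).trace = (s : ℂ) := by
    rw [hsdef]
    push_cast
    rw [Matrix.trace]
    simp only [Matrix.diag_apply, Matrix.mul_apply, Matrix.conjTranspose_apply,
      Complex.star_def, Complex.mul_conj, Complex.normSq_eq_norm_sq]
    push_cast
    rfl
  have heta : eta S T ^ 2 = s := by
    rw [hNeta]
    show Real.sqrt (∑ i, ∑ j, ‖N i j‖ ^ 2) ^ 2 = s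
    rw [← hsdef]
    exact Real.sq_sqrt hs0
  have hsum : ∑ i, lam i = (n : ℝ) - s := by
    have hc : ((∑ i, lam i : ℝ) : ℂ) = (((n : ℝ) - s : ℝ) : ℂ) := by
      push_cast
      rw [← htr, key, Matrix.trace_sub, htrN, Matrix.trace_one]
      simp
    exact_mod_cast hc
  rw [hdet]
  have hcast : (∏ i, (lam i : ℂ)) = ((∏ i, lam i : ℝ) : ℂ) := by push_cast; rfl
  rw [hcast, Complex.real_le_real]
  calc ∏ i, lam i ≤ ∏ i, Real.exp (lam i - 1) := by
        refine Finset.prod_le_prod (fun i _ => hnn i) (fun i _ => ?_)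
        have := Real.add_one_le_exp (lam i - 1)
        linarith
    _ = Real.exp (∑ i, (lam i - 1)) := (Real.exp_sum _ _).symm
    _ = Real.exp (-(eta S T ^ 2)) := by
        rw [heta]
        congr 1
        rw [Finset.sum_sub_distrib, hsum]
        simp
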